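/- Let A be a row circular binary matrix satisfying the standard assumptions, v and v' distinct vertices of Q*(A), and I = {1,…,n} ∖ (supp(v) ∪ supp(v')). Then every row of the contraction minor A/I has at most three ones. -/

import Mathlib

open Finset

/-- Support of a vector. -/
def supp {n : ℕ} (x : Fin n → ℝ) : Set (Fin n) := {j | x j ≠ 0}

/-- Support of the `t`-th row of a matrix. -/
def rowSupp {m n : ℕ} (A : Matrix (Fin m) (Fin n) ℝ) (t : Fin m) : Set (Fin n) :=
  {j | A t j ≠ 0}

def IsBinaryMatrix {m n : ℕ} (A : Matrix (Fin m) (Fin n) ℝ) : Prop :=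
  ∀ t j, A t j = 0 ∨ A t j = 1

def IsBinaryVec {n : ℕ} (x : Fin n → ℝ) : Prop := ∀ j, x j = 0 ∨ x j = 1

/-- The polyhedron `{x | A x ≥ b, x ≥ 0}`. -/
def polyP {m n : ℕ} (A : Matrix (Fin m) (Fin n) ℝ) (b : Fin m → ℝ) : Set (Fin n → ℝ) :=
  {x | (∀ i, b i ≤ ∑ j, A i j * x j) ∧ ∀ j, 0 ≤ x j}

/-- The linear relaxation `Q(A) = {x | A x ≥ 1, x ≥ 0}`. -/
def polyQ {m n : ℕ} (A : Matrix (Fin m) (Fin n) ℝ) : Set (Fin n → ℝ) :=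
  {x | (∀ i, 1 ≤ ∑ j, A i j * x j) ∧ ∀ j, 0 ≤ x j}

/-- The set covering polyhedron `Q*(A)`: convex hull of nonnegative integer solutions of
`A x ≥ 1`. -/
def Qstar {m n : ℕ} (A : Matrix (Fin m) (Fin n) ℝ) : Set (Fin n → ℝ) :=
  convexHull ℝ {x | (∀ j, ∃ k : ℕ, x j = k) ∧ ∀ i, 1 ≤ ∑ j, A i j * x j}

/-- A vertex of a convex set is an extreme point. -/
def IsVertex {n : ℕ} (S : Set (Fin n → ℝ)) (v : Fin n → ℝ) : Prop :=
  v ∈ S.extremePoints ℝ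

/-- Two distinct vertices are adjacent when they lie on a common edge, i.e. the segment
joining them is a face (extreme subset) of `S`. -/
def AdjacentVerts {n : ℕ} (S : Set (Fin n → ℝ)) (v w : Fin n → ℝ) : Prop :=
  v ≠ w ∧ IsVertex S v ∧ IsVertex S w ∧ IsExtreme ℝ S (segment ℝ v w)

/-- There is a row support `C` with `C ∩ supp v = {p}` and `C ∩ supp v' = {p'}`. -/
def jsgEdge {m n : ℕ} (A : Matrix (Fin m) (Fin n) ℝ) (v v' : Fin n → ℝ)
    (p p' : Fin n) : Prop :=
  ∃ t, rowSupp A t ∩ supp v = {p} ∧ rowSupp A t ∩ supp v' = {p'}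

/-- The joint saturation graph of `v` and `v'` with respect to `A`. -/
def JSG {m n : ℕ} (A : Matrix (Fin m) (Fin n) ℝ) (v v' : Fin n → ℝ) :
    SimpleGraph (Fin n) where
  Adj p p' := p ≠ p' ∧ (jsgEdge A v v' p p' ∨ jsgEdge A v v' p' p)
  symm := ⟨fun p p' h => ⟨h.1.symm, h.2.symm⟩⟩
  loopless := ⟨fun p h => h.1 rfl⟩

/-- The node set of the joint saturation graph: the symmetric difference of the supports. -/
def jsgNodes {n : ℕ} (v v' : Fin n → ℝ) : Set (Fin n) :=
  (supp v \ supp v') ∪ (supp v' \ supp v)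

def JSGConnected {m n : ℕ} (A : Matrix (Fin m) (Fin n) ℝ) (v v' : Fin n → ℝ) : Prop :=
  ∀ p ∈ jsgNodes v v', ∀ q ∈ jsgNodes v v', (JSG A v v').Reachable p q

/-- One of the two partite sets is contained in a single connected component. -/
def JSGPartiteConnected {m n : ℕ} (A : Matrix (Fin m) (Fin n) ℝ) (v v' : Fin n → ℝ) : Prop :=
  (∀ p ∈ supp v \ supp v', ∀ q ∈ supp v \ supp v', (JSG A v v').Reachable p q) ∨
  (∀ p ∈ supp v' \ supp v, ∀ q ∈ supp v' \ supp v, (JSG A v v').Reachable p q)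

/-- Exactly two components, one of which is an isolated node. -/
def JSGAlmostConnected {m n : ℕ} (A : Matrix (Fin m) (Fin n) ℝ) (v v' : Fin n → ℝ) : Prop :=
  ∃ q ∈ jsgNodes v v', (∀ p, ¬ (JSG A v v').Adj q p) ∧ (jsgNodes v v' \ {q}).Nonempty ∧
    ∀ p ∈ jsgNodes v v' \ {q}, ∀ r ∈ jsgNodes v v' \ {q}, (JSG A v v').Reachable p r

/-- The (directed) circular arc from `i` to `j` in `Fin n`. -/
def arc {n : ℕ} [NeZero n] (i j : Fin n) : Set (Fin n) :=
  {k | ∃ h : ℕ, h ≤ ((j - i : Fin n) : ℕ) ∧ k = i + (Fin.ofNat n h)}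

/-- A matrix is row circular if each row support is a circular arc. -/
def RowCircular {m n : ℕ} [NeZero n] (A : Matrix (Fin m) (Fin n) ℝ) : Prop :=
  ∀ t, ∃ i j : Fin n, rowSupp A t = arc i j

/-- The standard assumptions: binary, no dominating rows, between 2 and n-1 ones per row,
no all-zero or all-one column. -/
def StandardAssumptions {m n : ℕ} (A : Matrix (Fin m) (Fin n) ℝ) : Prop :=
  IsBinaryMatrix A ∧
  (∀ s t : Fin m, s ≠ t → ¬ rowSupp A s ⊆ rowSupp A t) ∧
  (∀ t, 2 ≤ (rowSupp A t).ncard ∧ (rowSupp A t).ncard ≤ n - 1) ∧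
  (∀ j : Fin n, (∃ t, A t j ≠ 0) ∧ (∃ t, A t j = 0))

/-- `a` and `b` occur consecutively (in either order) in the list `l`. -/
def ListConsec {α : Type*} (l : List α) (a b : α) : Prop :=
  ∃ k : ℕ, (l[k]? = some a ∧ l[k+1]? = some b) ∨ (l[k]? = some b ∧ l[k+1]? = some a)

/-- `a` and `b` occur cyclically consecutively (in either order) in the list `l`. -/
def CycConsec {α : Type*} (l : List α) (a b : α) : Prop :=
  ∃ k : ℕ, k < l.length ∧
    ((l[k]? = some a ∧ l[(k+1) % l.length]? = some b) ∨
     (l[k]? = some b ∧ l[(k+1) % l.length]? = some a))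

/-- The set `S` induces a path (possibly a single node) in `G`. -/
def IsPathOn {n : ℕ} (G : SimpleGraph (Fin n)) (S : Set (Fin n)) : Prop :=
  ∃ l : List (Fin n), l.Nodup ∧ (∀ x, x ∈ S ↔ x ∈ l) ∧
    (∀ a b, a ∈ S → G.Adj a b → ListConsec l a b) ∧
    (∀ a b, ListConsec l a b → G.Adj a b)

/-- The set `S` induces a cycle in `G`. -/
def IsCycleOn {n : ℕ} (G : SimpleGraph (Fin n)) (S : Set (Fin n)) : Prop :=
  ∃ l : List (Fin n), 3 ≤ l.length ∧ l.Nodup ∧ (∀ x, x ∈ S ↔ x ∈ l) ∧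
    (∀ a b, a ∈ S → G.Adj a b → CycConsec l a b) ∧
    (∀ a b, CycConsec l a b → G.Adj a b)

/-- `p` and `q` are cyclically consecutive elements of `S`. -/
def CyclConsecIn {n : ℕ} [NeZero n] (S : Set (Fin n)) (p q : Fin n) : Prop :=
  p ≠ q ∧ p ∈ S ∧ q ∈ S ∧ (arc p q ∩ S = {p, q} ∨ arc q p ∩ S = {p, q})

/-- The circulant matrix `C(n,2)` with row supports `{t, t+1}` (mod n). -/
def Cn2 (n : ℕ) [NeZero n] : Matrix (Fin n) (Fin n) ℝ :=
  fun t j => if j = t ∨ j = t + 1 then 1 else 0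

/-- Append a row to a matrix. -/
def appendRow {m n : ℕ} (A : Matrix (Fin m) (Fin n) ℝ) (a : Fin n → ℝ) :
    Matrix (Fin (m+1)) (Fin n) ℝ :=
  fun t j => if h : (t : ℕ) < m then A ⟨t, h⟩ j else a j

/-- A set of points is integral if all its extreme points are integer vectors. -/
def IsIntegralSet {n : ℕ} (S : Set (Fin n → ℝ)) : Prop :=
  ∀ x ∈ S.extremePoints ℝ, ∀ j, ∃ z : ℤ, x j = z

/-- A binary matrix is minimally nonideal if `Q(A)` is not integral but both restrictions
`Q(A) ∩ {x_i = 0}` and `Q(A) ∩ {x_i = 1}` are integral for every coordinate `i`. -/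
def MinimallyNonideal {m n : ℕ} (A : Matrix (Fin m) (Fin n) ℝ) : Prop :=
  ¬ IsIntegralSet (polyQ A) ∧
  ∀ i : Fin n, IsIntegralSet (polyQ A ∩ {x | x i = 0}) ∧
               IsIntegralSet (polyQ A ∩ {x | x i = 1})

/-- The matrix of the degenerate projective plane with `t+1` points and lines. -/
def Jmat (t : ℕ) : Matrix (Fin (t+1)) (Fin (t+1)) ℝ :=
  fun i j => if i = 0 then (if j = 0 then 0 else 1) else (if j = 0 ∨ j = i then 1 else 0)

/-- `A` is isomorphic to some degenerate projective plane matrix `J_t`, `t ≥ 2`. -/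
def IsoToDegenProjPlane {m n : ℕ} (A : Matrix (Fin m) (Fin n) ℝ) : Prop :=
  ∃ t : ℕ, 2 ≤ t ∧ ∃ (σ : Fin m ≃ Fin (t+1)) (τ : Fin n ≃ Fin (t+1)),
    ∀ i j, A i j = Jmat t (σ i) (τ j)

/-- `A₁` is the core of `A`: a square nonsingular row submatrix with `r` ones per row and
per column, all other rows of `A` having more than `r` ones. -/
def IsCore {m n : ℕ} (A : Matrix (Fin m) (Fin n) ℝ) (A₁ : Matrix (Fin n) (Fin n) ℝ)
    (r : ℕ) : Prop :=
  2 ≤ r ∧ A₁.det ≠ 0 ∧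
  (∃ f : Fin n → Fin m, Function.Injective f ∧ (∀ i, A₁ i = A (f i)) ∧
    ∀ t, t ∉ Set.range f → r < (rowSupp A t).ncard) ∧
  (∀ i, (rowSupp A₁ i).ncard = r) ∧ (∀ j, {i | A₁ i j ≠ 0}.ncard = r)

/-- `B₁` is the core of the blocker of `A`: a square nonsingular matrix whose rows are
binary vertices of `Q*(A)` with `s` ones per row and per column, all other binary
vertices of `Q*(A)` having more than `s` ones. -/
def IsBlockerCore {m n : ℕ} (A : Matrix (Fin m) (Fin n) ℝ) (B₁ : Matrix (Fin n) (Fin n) ℝ)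
    (s : ℕ) : Prop :=
  2 ≤ s ∧ B₁.det ≠ 0 ∧
  (∀ i, IsBinaryVec (B₁ i) ∧ IsVertex (Qstar A) (B₁ i)) ∧
  Function.Injective (fun i => B₁ i) ∧
  (∀ i, (rowSupp B₁ i).ncard = s) ∧ (∀ j, {i | B₁ i j ≠ 0}.ncard = s) ∧
  (∀ x, IsBinaryVec x → IsVertex (Qstar A) x → (∀ i, x ≠ B₁ i) → s < (supp x).ncard)

/-- `w^i` for `n = 3ν`: the complement of the characteristic vector of the residue class
`i` mod 3. -/
def wVec (n : ℕ) (i : Fin 3) : Fin n → ℝ :=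
  fun k => if (k : ℕ) % 3 = (i : ℕ) then 0 else 1

/-- `a^i` for `n = 3ν`: the characteristic vector of the residue class `i` mod 3
(`a¹ = (1,0,0,1,0,0,…)` corresponds to `i = 0`). -/
def aVec (n : ℕ) (i : ℕ) : Fin n → ℝ :=
  fun k => if (k : ℕ) % 3 = i then 1 else 0

/-!
Let `R = T ∩ (supp v ∪ supp v')` be a minimal row of `A/I`, where the row `T` is the arc
`arc i j`. Every `c ∈ R` lies in `supp v` or `supp v'`, and an integral vertex of `Q*(A)` is a
minimal cover, so `c` has a private row `W`. If `W ∩ (supp v ∪ supp v') ⊆ R`, minimality makes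
the two equal and `R` meets one of the supports only in `c`; if this happens for both supports,
`|R| ≤ 2`, and otherwise it happens for at most one `c`. In the remaining case the arc `W` leaves
`T` across `j` or across `i`, covering the whole stretch from `c` to some support point `x`
outside `T`. Two distinct points leaving across the same end are impossible: the one whose
stretch reaches farther would contain the other's escape point, which is private in the wrong
support. Hence `|R| ≤ 1 + 1 + 1`.
-/

namespace Fin

variable {n : ℕ}

def cwDist (a b : Fin n) : ℕ := ((b - a : Fin n) : ℕ)

lemma cwDist_lt (a b : Fin n) : cwDist a b < n := (b - a).isLt

variable [NeZero n]

lemma cwDist_eq_add_mod (a b c : Fin n) : cwDist a c = (cwDist a b + cwDist b c) % n := by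
  rw [cwDist, ← sub_add_sub_cancel c b a, Fin.val_add, add_comm]; rfl

lemma cwDist_eq_add_or (a b c : Fin n) :
    cwDist a c = cwDist a b + cwDist b c ∨ cwDist a c + n = cwDist a b + cwDist b c := by
  have hab := cwDist_lt a b
  have hbc := cwDist_lt b c
  rw [cwDist_eq_add_mod a b c]
  rcases Nat.lt_or_ge (cwDist a b + cwDist b c) n with h | h
  · exact .inl (Nat.mod_eq_of_lt h)
  · right
    rw [Nat.mod_eq_sub_mod h, Nat.mod_eq_of_lt (by omega)]
    omega

lemma cwDist_le_add (a b c : Fin n) : cwDist a c ≤ cwDist a b + cwDist b c := by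
  rcases cwDist_eq_add_or a b c with h | h <;> omega

lemma cwDist_eq_add_of_le_left {a b c : Fin n} (h : cwDist a b ≤ cwDist a c) :
    cwDist a c = cwDist a b + cwDist b c := by
  have := cwDist_lt b c
  rcases cwDist_eq_add_or a b c with h' | h' <;> omega

lemma cwDist_eq_add_of_le_right {a b c : Fin n} (h : cwDist b c ≤ cwDist a c) :
    cwDist a c = cwDist a b + cwDist b c := by
  have := cwDist_lt a b
  rcases cwDist_eq_add_or a b c with h' | h' <;> omega

end Fin

open Fin

section Arc

variable {n : ℕ} [NeZero n]

lemma mem_arc_iff {i j w : Fin n} : w ∈ arc i j ↔ cwDist i w ≤ cwDist i j := by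
  constructor
  · rintro ⟨h, hh, rfl⟩
    have hlt : h < n := hh.trans_lt (cwDist_lt i j)
    simpa [cwDist, Fin.val_ofNat, Nat.mod_eq_of_lt hlt] using hh
  · intro h
    exact ⟨cwDist i w, h, by simp [cwDist]⟩

lemma mem_arc_iff' {i j w : Fin n} : w ∈ arc i j ↔ cwDist w j ≤ cwDist i j := by
  rw [mem_arc_iff]
  constructor
  · intro h; rw [cwDist_eq_add_of_le_left h]; omega
  · intro h; rw [cwDist_eq_add_of_le_right h]; omega

lemma arc_subset_arc {a b c x : Fin n} (hx : x ∈ arc a b) (hcx : cwDist a c ≤ cwDist a x) :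
    arc c x ⊆ arc a b := by
  intro w hw
  rw [mem_arc_iff] at hx hw ⊢
  have := cwDist_le_add a c w
  rw [cwDist_eq_add_of_le_left hcx] at hx
  omega

lemma arc_subset_or_arc_subset {a b c x : Fin n} (hc : c ∈ arc a b) (hx : x ∈ arc a b) :
    arc c x ⊆ arc a b ∨ arc x c ⊆ arc a b :=
  (le_total (cwDist a c) (cwDist a x)).imp (arc_subset_arc hx) (arc_subset_arc hc)

lemma mem_arc_of_cwDist_le {i c w x : Fin n} (hcw : cwDist i c ≤ cwDist i w)
    (hwx : cwDist i w ≤ cwDist i x) : w ∈ arc c x := by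
  rw [mem_arc_iff]
  have := cwDist_eq_add_of_le_left hcw
  have := cwDist_eq_add_of_le_left (hcw.trans hwx)
  omega

lemma mem_arc_of_cwDist_le' {j c w x : Fin n} (hcw : cwDist c j ≤ cwDist w j)
    (hwx : cwDist w j ≤ cwDist x j) : w ∈ arc x c := by
  rw [mem_arc_iff']
  have := cwDist_eq_add_of_le_right hcw
  have := cwDist_eq_add_of_le_right (hcw.trans hwx)
  omega

end Arc

section Escape

variable {α β : Type*} [LinearOrder β]

/-- `W` is a private row of `c` leaving the row `{w | pos w ≤ b}` across its end `b`. -/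
def EscapesPast (P Q : Set α) (pos : α → β) (b : β) (c : α) : Prop :=
  ∃ W : Set α, (∃ u ∈ ({P, Q} : Set (Set α)), W ∩ u = {c}) ∧
    ∃ x ∈ P ∪ Q, b < pos x ∧ ∀ w, pos c ≤ pos w → pos w ≤ pos x → w ∈ W

lemma mem_of_mem_pair_of_ne {P Q u u' : Set α} (hu : u ∈ ({P, Q} : Set (Set α)))
    (hu' : u' ∈ ({P, Q} : Set (Set α))) (huu' : u ≠ u') {x : α} (hx : x ∈ P ∪ Q)
    (hxu : x ∉ u) : x ∈ u' := by
  simp only [Set.mem_insert_iff, Set.mem_singleton_iff] at hu hu'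
  rcases hu with rfl | rfl <;> rcases hu' with rfl | rfl <;> simp_all

/-- Two escaping points below the bound coincide: otherwise each one's escape interval
would swallow the other one's escape point, which lies in the wrong one of `P`, `Q`. -/
lemma EscapesPast.eq {P Q : Set α} {pos : α → β} {b : β} {c c' : α}
    (hcb : pos c ≤ b) (hc'b : pos c' ≤ b)
    (h : EscapesPast P Q pos b c) (h' : EscapesPast P Q pos b c') : c = c' := by
  wlog hcc' : pos c ≤ pos c' generalizing c c'
  · exact (this hc'b hcb h' h (le_of_not_ge hcc')).symm
  by_contra hne
  obtain ⟨W, ⟨u, hu, hWu⟩, x, hxS, hbx, hWx⟩ := h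
  obtain ⟨W', ⟨u', hu', hWu'⟩, x', hx'S, hbx', hWx'⟩ := h'
  have eq_of_mem {W u : Set α} {c y : α} (hW : W ∩ u = {c}) (hyW : y ∈ W) (hyu : y ∈ u) :
      y = c := hW.subset ⟨hyW, hyu⟩
  have hc'W : c' ∈ W := hWx c' hcc' (hc'b.trans hbx.le)
  have hc'u' : c' ∈ u' := (hWu'.symm.subset rfl).2
  have hc'u : c' ∉ u := fun h => hne (eq_of_mem hWu hc'W h).symm
  have huu' : u ≠ u' := by rintro rfl; exact hc'u hc'u'
  have hxu' : x ∈ u' := mem_of_mem_pair_of_ne hu hu' huu' hxS fun hxu =>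
    (eq_of_mem hWu (hWx x (hcb.trans hbx.le) le_rfl) hxu ▸ hbx).not_ge hcb
  have hx'u : x' ∈ u := mem_of_mem_pair_of_ne hu' hu huu'.symm hx'S fun hx'u' =>
    (eq_of_mem hWu' (hWx' x' (hc'b.trans hbx'.le) le_rfl) hx'u' ▸ hbx').not_ge hc'b
  rcases le_or_gt (pos x) (pos x') with hxx' | hx'x
  · have hxW' : x ∈ W' := hWx' x (hc'b.trans hbx.le) hxx'
    exact (eq_of_mem hWu' hxW' hxu' ▸ hbx).not_ge hc'b
  · have hx'W : x' ∈ W := hWx x' (hcb.trans hbx'.le) hx'x.le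
    exact (eq_of_mem hWu hx'W hx'u ▸ hbx').not_ge hcb

lemma setOf_escapesPast_subsingleton (P Q : Set α) (pos : α → β) (b : β) :
    {c | pos c ≤ b ∧ EscapesPast P Q pos b c}.Subsingleton :=
  fun _ hc _ hc' => hc.2.eq hc.1 hc'.1 hc'.2

end Escape

lemma Set.ncard_le_three_of_subset_union {α : Type*} [Finite α] {R Z E₁ E₂ : Set α}
    (hR : R ⊆ Z ∪ E₁ ∪ E₂) (hZ : Z.Subsingleton) (hE₁ : E₁.Subsingleton)
    (hE₂ : E₂.Subsingleton) : R.ncard ≤ 3 := by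
  have := Set.ncard_union_le (Z ∪ E₁) E₂
  have := Set.ncard_union_le Z E₁
  have := (Set.ncard_le_ncard hR).trans (by omega : _ ≤ Z.ncard + E₁.ncard + E₂.ncard)
  simp only [← Set.ncard_le_one_iff_subsingleton] at hZ hE₁ hE₂
  omega

lemma Set.ncard_le_three_of_cover {α : Type*} [Finite α] {R P Q E₁ E₂ : Set α}
    (hRPQ : R ⊆ P ∪ Q) (hE₁ : E₁.Subsingleton) (hE₂ : E₂.Subsingleton)
    (hR : ∀ c ∈ R, (∃ u ∈ ({P, Q} : Set (Set α)), R ∩ u = {c}) ∨ c ∈ E₁ ∨ c ∈ E₂) :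
    R.ncard ≤ 3 := by
  by_cases hPQ : (∃ c, R ∩ P = {c}) ∧ ∃ c', R ∩ Q = {c'}
  · obtain ⟨⟨c, hc⟩, ⟨c', hc'⟩⟩ := hPQ
    have hRcc' : R ⊆ {c, c'} := fun w hw => by
      rcases hRPQ hw with h | h
      exacts [.inl (hc.subset ⟨hw, h⟩), .inr (hc'.subset ⟨hw, h⟩)]
    exact (Set.ncard_le_ncard hRcc').trans ((Set.ncard_insert_le _ _).trans (by simp))
  refine Set.ncard_le_three_of_subset_union
    (Z := {c | ∃ u ∈ ({P, Q} : Set (Set α)), R ∩ u = {c}}) (fun c hc => ?_) ?_ hE₁ hE₂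
  · rcases hR c hc with h | h | h
    exacts [.inl (.inl h), .inl (.inr h), .inr h]
  rintro c ⟨u, hu, hc⟩ c' ⟨u', hu', hc'⟩
  simp only [Set.mem_insert_iff, Set.mem_singleton_iff] at hu hu'
  rcases hu with rfl | rfl <;> rcases hu' with rfl | rfl
  · exact Set.singleton_injective (hc.symm.trans hc')
  · exact absurd ⟨⟨c, hc⟩, ⟨c', hc'⟩⟩ hPQ
  · exact absurd ⟨⟨c', hc'⟩, ⟨c, hc⟩⟩ hPQ
  · exact Set.singleton_injective (hc.symm.trans hc')

lemma IsBinaryMatrix.nonneg {m n : ℕ} {A : Matrix (Fin m) (Fin n) ℝ} (hA : IsBinaryMatrix A)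
    (i : Fin m) (j : Fin n) : 0 ≤ A i j :=
  (hA i j).elim (fun h => h.ge) (fun h => h ▸ zero_le_one)

lemma exists_mem_rowSupp_inter_supp_ne {m n : ℕ} {A : Matrix (Fin m) (Fin n) ℝ}
    {v : Fin n → ℝ} (hvA : ∀ i, 1 ≤ ∑ j, A i j * v j) {j : Fin n} (hj : j ∈ supp v)
    (hno : ∀ s, rowSupp A s ∩ supp v ≠ {j}) (i : Fin m) :
    ∃ j' ∈ rowSupp A i ∩ supp v, j' ≠ j := by
  obtain ⟨j₀, -, hj₀⟩ := Finset.exists_ne_zero_of_sum_ne_zero (zero_lt_one.trans_le (hvA i)).ne'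
  have hj₀' : j₀ ∈ rowSupp A i ∩ supp v := ⟨left_ne_zero_of_mul hj₀, right_ne_zero_of_mul hj₀⟩
  by_cases hji : j ∈ rowSupp A i
  · exact ((Set.nontrivial_iff_ne_singleton (Set.mem_inter hji hj)).mpr (hno i)).exists_ne j
  · exact ⟨j₀, hj₀', fun h => hji (h ▸ hj₀'.1)⟩

/-- Each support element of a vertex of `Q*(A)` has a private row: otherwise lowering and raising
that coordinate by one both stay in the generating set, and the vertex is their midpoint. -/
lemma IsVertex.exists_rowSupp_inter_supp_eq_singleton {m n : ℕ} {A : Matrix (Fin m) (Fin n) ℝ}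
    {v : Fin n → ℝ} (hv : IsVertex (Qstar A) v) (hA : IsBinaryMatrix A) {j : Fin n}
    (hj : j ∈ supp v) : ∃ s, rowSupp A s ∩ supp v = {j} := by
  set G := {x : Fin n → ℝ | (∀ j, ∃ k : ℕ, x j = k) ∧ ∀ i, 1 ≤ ∑ j, A i j * x j}
  obtain ⟨hvℕ, hvA⟩ : v ∈ G := extremePoints_convexHull_subset hv
  have one_le {x : ℝ} (hx : ∃ k : ℕ, x = k) (hx0 : x ≠ 0) : 1 ≤ x := by
    obtain ⟨k, rfl⟩ := hx
    exact Nat.one_le_cast.mpr (Nat.pos_of_ne_zero (by rintro rfl; simp at hx0))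
  by_contra! hno
  set e : Fin n → ℝ := Pi.single j 1
  have hlowℕ (j' : Fin n) : ∃ k : ℕ, (v - e) j' = k := by
    obtain ⟨k, hk⟩ := hvℕ j'
    by_cases h : j' = j
    · subst h
      have hk1 : 1 ≤ k := by exact_mod_cast hk ▸ one_le ⟨k, hk⟩ hj
      exact ⟨k - 1, by simp [e, hk, Nat.cast_sub hk1]⟩
    · exact ⟨k, by simp [e, h, hk]⟩
  have hlow : v - e ∈ G := by
    refine ⟨hlowℕ, fun i => ?_⟩
    obtain ⟨j', ⟨hAj', hvj'⟩, hj'j⟩ := exists_mem_rowSupp_inter_supp_ne hvA hj hno i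
    calc (1 : ℝ) ≤ A i j' * (v - e) j' := by
          simpa [e, hj'j, (hA i j').resolve_left hAj'] using one_le (hvℕ j') hvj'
      _ ≤ ∑ l, A i l * (v - e) l :=
          Finset.single_le_sum (f := fun l => A i l * (v - e) l)
            (fun l _ => mul_nonneg (hA.nonneg i l) (by obtain ⟨k, hk⟩ := hlowℕ l; simp [hk]))
            (Finset.mem_univ j')
  have hhigh : v + e ∈ G := by
    refine ⟨fun j' => ?_, fun i => (hvA i).trans (Finset.sum_le_sum fun l _ => ?_)⟩
    · obtain ⟨k, hk⟩ := hvℕ j'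
      by_cases h : j' = j
      · subst h; exact ⟨k + 1, by simp [e, hk]⟩
      · exact ⟨k, by simp [e, h, hk]⟩
    · exact mul_le_mul_of_nonneg_left
        (le_add_of_nonneg_right ((Pi.single_nonneg.mpr zero_le_one : 0 ≤ e) l)) (hA.nonneg i l)
  have hmid : v ∈ openSegment ℝ (v - e) (v + e) :=
    ⟨1 / 2, 1 / 2, by norm_num, by norm_num, by norm_num, by ext; simp; ring⟩
  have hve := congrFun ((mem_extremePoints.mp hv).2 _ (subset_convexHull ℝ G hlow) _
    (subset_convexHull ℝ G hhigh) hmid).1 j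
  simp [e] at hve

lemma mem_or_escapesPast_of_arc {n : ℕ} [NeZero n] {P Q : Set (Fin n)} {i j a b c : Fin n}
    (hc : c ∈ arc i j) (hpriv : ∃ u ∈ ({P, Q} : Set (Set (Fin n))), arc a b ∩ u = {c})
    (hmin : arc a b ∩ (P ∪ Q) ⊆ arc i j ∩ (P ∪ Q) → arc a b ∩ (P ∪ Q) = arc i j ∩ (P ∪ Q)) :
    (∃ u ∈ ({P, Q} : Set (Set (Fin n))), arc i j ∩ (P ∪ Q) ∩ u = {c}) ∨
      c ∈ {c | cwDist i c ≤ cwDist i j ∧ EscapesPast P Q (cwDist i) (cwDist i j) c} ∨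
      c ∈ {c | cwDist c j ≤ cwDist i j ∧ EscapesPast P Q (cwDist · j) (cwDist i j) c} := by
  obtain ⟨u, hu, hWu⟩ := hpriv
  by_cases hsub : arc a b ∩ (P ∪ Q) ⊆ arc i j ∩ (P ∪ Q)
  · have huS : u ⊆ P ∪ Q := by
      simp only [Set.mem_insert_iff, Set.mem_singleton_iff] at hu
      rcases hu with rfl | rfl
      exacts [Set.subset_union_left, Set.subset_union_right]
    refine .inl ⟨u, hu, ?_⟩
    rw [← hmin hsub, Set.inter_assoc, Set.inter_eq_right.mpr huS, hWu]
  obtain ⟨x, ⟨hxW, hxS⟩, hxT⟩ := Set.not_subset.mp hsub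
  replace hxT : x ∉ arc i j := fun h => hxT ⟨h, hxS⟩
  have hcW : c ∈ arc a b := (hWu.symm.subset rfl).1
  refine .inr ((arc_subset_or_arc_subset hcW hxW).imp (fun h => ?_) (fun h => ?_))
  · exact ⟨mem_arc_iff.mp hc, arc a b, ⟨u, hu, hWu⟩, x, hxS,
      lt_of_not_ge (mt mem_arc_iff.mpr hxT), fun w hcw hwx => h (mem_arc_of_cwDist_le hcw hwx)⟩
  · exact ⟨mem_arc_iff'.mp hc, arc a b, ⟨u, hu, hWu⟩, x, hxS,
      lt_of_not_ge (mt mem_arc_iff'.mpr hxT), fun w hcw hwx => h (mem_arc_of_cwDist_le' hcw hwx)⟩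

theorem stmt9_general {m n : ℕ} [NeZero n] (A : Matrix (Fin m) (Fin n) ℝ)
    (hstd : StandardAssumptions A) (hcirc : RowCircular A)
    (v v' : Fin n → ℝ)
    (hv : IsVertex (Qstar A) v) (hv' : IsVertex (Qstar A) v') :
    ∀ t : Fin m,
      (∀ s : Fin m, rowSupp A s ∩ (supp v ∪ supp v') ⊆ rowSupp A t ∩ (supp v ∪ supp v') →
        rowSupp A s ∩ (supp v ∪ supp v') = rowSupp A t ∩ (supp v ∪ supp v')) →
      (rowSupp A t ∩ (supp v ∪ supp v')).ncard ≤ 3 := by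
  intro t hmin
  obtain ⟨i, j, hT⟩ := hcirc t
  rw [hT] at hmin ⊢
  refine Set.ncard_le_three_of_cover Set.inter_subset_right
    (setOf_escapesPast_subsingleton (supp v) (supp v') (cwDist i) (cwDist i j))
    (setOf_escapesPast_subsingleton (supp v) (supp v') (cwDist · j) (cwDist i j))
    fun c hc => ?_
  obtain ⟨s, hs⟩ : ∃ s, ∃ u ∈ ({supp v, supp v'} : Set (Set (Fin n))), rowSupp A s ∩ u = {c} := by
    rcases hc.2 with h | h
    · obtain ⟨s, hs⟩ := hv.exists_rowSupp_inter_supp_eq_singleton hstd.1 h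
      exact ⟨s, _, .inl rfl, hs⟩
    · obtain ⟨s, hs⟩ := hv'.exists_rowSupp_inter_supp_eq_singleton hstd.1 h
      exact ⟨s, _, .inr rfl, hs⟩
  obtain ⟨a, b, hab⟩ := hcirc s
  rw [hab] at hs
  exact mem_or_escapesPast_of_arc hc.1 hs (hab ▸ hmin s)

/-- every row of the contraction minor `A/I`, where
`I = {1,…,n} ∖ (supp v ∪ supp v')`, has at most three ones.  (Rows of `A/I` are the
restrictions `rowSupp A t ∩ (supp v ∪ supp v')` that are minimal under inclusion.) -/
theorem stmt9 {m n : ℕ} [NeZero n] (A : Matrix (Fin m) (Fin n) ℝ)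
    (hstd : StandardAssumptions A) (hcirc : RowCircular A)
    (v v' : Fin n → ℝ) (hne : v ≠ v')
    (hv : IsVertex (Qstar A) v) (hv' : IsVertex (Qstar A) v') :
    ∀ t : Fin m,
      (∀ s : Fin m, rowSupp A s ∩ (supp v ∪ supp v') ⊆ rowSupp A t ∩ (supp v ∪ supp v') →
        rowSupp A s ∩ (supp v ∪ supp v') = rowSupp A t ∩ (supp v ∪ supp v')) →
      (rowSupp A t ∩ (supp v ∪ supp v')).ncard ≤ 3 :=
  stmt9_general A hstd hcirc v v' hv hv'
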